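/- arXiv:2408.10054 — 5 statements merged into one kernel-verified Lean document; each statement's English description precedes it below -/
import Mathlib

section
/- Let L ≥ 1, and let fc : Fin 2 → BitVec L → BitVec L and cf : BitVec L → BitVec L satisfy cf (fc x v) = v for all x : Fin 2 and v : BitVec L (cf is a left inverse of each fc x, as holds for the first-children links fc₀, fc₁ and their inverse link cf in a qif table). Define the following maps on BitVec L × Fin 2 × BitVec L: V_fc (v, x, u) = (v, x, u ^^^ fc x v); V_cf (v, x, u) = (v ^^^ cf u, x, u); Swap (v, x, u) = (u, x, v). Then for all v and x, (Swap ∘ V_cf ∘ V_fc) (v, x, 0) = (fc x v, x, 0). That is, the xor-based gadget implementing the qif instruction moves the qif-table pointer from node v to its child fc x v conditioned on the quantum coin value x, while returning the auxiliary register to 0 (proper uncomputation of the intermediate value). -/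
/-- The xor-based gadget implementing the `qif` instruction: given first-children links
`fc₀, fc₁` of a qif table and their inverse link `cf` (so `cf (fc x v) = v`), the
composition of `V_fc (v, x, u) = (v, x, u ^^^ fc x v)`, then
`V_cf (v, x, u) = (v ^^^ cf u, x, u)`, then the swap `(v, x, u) ↦ (u, x, v)`,
moves the qif-table pointer from node `v` to its child `fc x v` conditioned on the
quantum coin value `x`, returning the auxiliary register to `0` (proper uncomputation
of the intermediate value). -/
theorem qif_gadget (L : ℕ) (hL : 1 ≤ L)
    (fc : Fin 2 → BitVec L → BitVec L) (cf : BitVec L → BitVec L)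
    (hcf : ∀ (x : Fin 2) (v : BitVec L), cf (fc x v) = v) :
    ∀ (v : BitVec L) (x : Fin 2),
      ((fun p : BitVec L × Fin 2 × BitVec L => (p.2.2, p.2.1, p.1)) ∘
        (fun p : BitVec L × Fin 2 × BitVec L => (p.1 ^^^ cf p.2.2, p.2.1, p.2.2)) ∘
        (fun p : BitVec L × Fin 2 × BitVec L => (p.1, p.2.1, p.2.2 ^^^ fc p.2.1 p.1)))
          (v, x, 0)
        = (fc x v, x, 0) := by
  intro v x
  simp [Function.comp, hcf, BitVec.zero_xor, BitVec.xor_self]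
end

section
/- Fix n ≥ 1 and let V = (Fin n → Bool) → ℂ be the n-qubit state space with computational basis states δ_b for b : Fin n → Bool. Let H₀ be the Hadamard gate on qubit 0, i.e., the linear map with (H₀ ψ) b = (ψ (Function.update b 0 false) + (if b 0 then −1 else 1) * ψ (Function.update b 0 true)) / √2, and for k with k + 1 < n let CNOT_k be the linear map with (CNOT_k ψ) b = ψ (Function.update b (k+1) (xor (b (k+1)) (b k))) (CNOT with control qubit k and target qubit k+1). Then (CNOT_{n−2} ∘ ⋯ ∘ CNOT_1 ∘ CNOT_0 ∘ H₀) δ_{(fun _ => false)} = (δ_{(fun _ => false)} + δ_{(fun _ => true)}) / √2. That is, the GHZ-generation program (Hadamard on the first qubit followed by the chain of CNOTs produced by unfolding the recursion) maps |0…0⟩ to the n-qubit GHZ state (|0…0⟩ + |1…1⟩)/√2. -/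
/-- The computational basis state `δ_b` of an `n`-qubit register, as an amplitude
function `(Fin n → Bool) → ℂ`. -/
noncomputable def qDelta (n : ℕ) (b : Fin n → Bool) : (Fin n → Bool) → ℂ :=
  fun c => if c = b then 1 else 0

/-- The Hadamard gate on qubit `k` of an `n`-qubit register, acting on amplitude
functions. -/
noncomputable def qHad (n : ℕ) (k : Fin n) (ψ : (Fin n → Bool) → ℂ) :
    (Fin n → Bool) → ℂ :=
  fun b => (ψ (Function.update b k false) +
      (if b k then -1 else 1) * ψ (Function.update b k true)) / (Real.sqrt 2 : ℂ)

/-- The CNOT gate with control qubit `c` and target qubit `t`, acting on amplitude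
functions. -/
noncomputable def qCNOT (n : ℕ) (c t : Fin n) (ψ : (Fin n → Bool) → ℂ) :
    (Fin n → Bool) → ℂ :=
  fun b => ψ (Function.update b t (xor (b t) (b c)))

/-- The GHZ-generation program — a Hadamard on the first qubit followed by the chain of
CNOTs `CNOT_0, CNOT_1, …, CNOT_{n−2}` (control `k`, target `k+1`) produced by unfolding
the recursion — maps `|0…0⟩` to the `n`-qubit GHZ state `(|0…0⟩ + |1…1⟩)/√2`. -/
theorem ghz_program_correct (n : ℕ) (hn : 1 ≤ n) :
    List.foldl
        (fun ψ (k : Fin (n - 1)) =>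
          qCNOT n (Fin.cast (by omega) k.castSucc) (Fin.cast (by omega) k.succ) ψ)
        (qHad n ⟨0, hn⟩ (qDelta n fun _ => false))
        (List.finRange (n - 1))
      = fun b => ((if b = (fun _ => false) then 1 else 0) +
          (if b = (fun _ => true) then 1 else 0)) / (Real.sqrt 2 : ℂ) := by
  have key : ∀ m : ℕ, m ≤ n - 1 →
      List.foldl
        (fun ψ (k : Fin (n - 1)) =>
          qCNOT n (Fin.cast (by omega) k.castSucc) (Fin.cast (by omega) k.succ) ψ)
        (qHad n ⟨0, hn⟩ (qDelta n fun _ => false))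
        ((List.finRange (n - 1)).take m)
      = fun b => ((if b = (fun _ => false) then 1 else 0) +
          (if b = (fun i : Fin n => decide (i.val ≤ m)) then 1 else 0)) /
            (Real.sqrt 2 : ℂ) := by
    intro m hm
    induction m with
    | zero =>
      simp only [List.take_zero, List.foldl_nil]
      funext b
      simp only [qHad, qDelta]
      have h2 : Function.update b ⟨0, hn⟩ true ≠ (fun _ => false) := by
        intro h
        have := congrFun h ⟨0, hn⟩
        simp at this
      have hne : (fun _ : Fin n => false) ≠ (fun i : Fin n => decide (i.val ≤ 0)) := by
        intro h
        have := congrFun h ⟨0, hn⟩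
        simp at this
      have hmain : (Function.update b ⟨0, hn⟩ false = fun _ => false) ↔
          (b = (fun _ => false) ∨ b = fun i : Fin n => decide (i.val ≤ 0)) := by
        rw [Function.update_eq_iff]
        constructor
        · rintro ⟨-, h⟩
          by_cases hbk : b ⟨0, hn⟩
          · right
            funext x
            by_cases hx : x = ⟨0, hn⟩
            · subst hx; simp [hbk]
            · rw [h x hx]
              have hxv : x.val ≠ 0 := fun hc => hx (Fin.ext hc)
              exact (decide_eq_false (by omega)).symm
          · left
            funext x
            by_cases hx : x = ⟨0, hn⟩
            · subst hx; simpa using hbk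
            · exact h x hx
        · rintro (rfl | rfl)
          · exact ⟨rfl, fun x _ => rfl⟩
          · refine ⟨rfl, fun x hx => ?_⟩
            have hxv : x.val ≠ 0 := fun hc => hx (Fin.ext hc)
            simp [hxv]
      rw [if_neg h2, mul_zero, add_zero]
      simp only [hmain]
      by_cases hb0 : b = (fun _ => false)
      · rw [if_pos (Or.inl hb0), if_pos hb0,
          if_neg (show b ≠ _ by rw [hb0]; exact hne), add_zero]
      · by_cases hb1 : b = (fun i : Fin n => decide (i.val ≤ 0))
        · rw [if_pos (Or.inr hb1), if_neg hb0, if_pos hb1, zero_add]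
        · rw [if_neg (by tauto), if_neg hb0, if_neg hb1, add_zero]
    | succ m ih =>
      have hm' : m < n - 1 := hm
      have hmn : m + 1 < n := by omega
      rw [List.take_succ,
        List.getElem?_eq_getElem (by simpa using hm'),
        List.getElem_finRange, List.foldl_append, ih (le_of_lt hm')]
      simp only [Option.toList_some, List.foldl_cons, List.foldl_nil]
      show qCNOT n ⟨m, by omega⟩ ⟨m + 1, hmn⟩ _ = _
      funext b
      simp only [qCNOT]
      set c : Fin n := ⟨m, by omega⟩ with hc
      set t : Fin n := ⟨m + 1, hmn⟩ with ht
      have hct : c ≠ t := by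
        intro h
        have := congrArg Fin.val h
        simp [hc, ht] at this
      have e1 : (Function.update b t (xor (b t) (b c)) = fun _ => false) ↔
          b = (fun _ => false) := by
        rw [Function.update_eq_iff]
        constructor
        · rintro ⟨hx, h⟩
          funext x
          by_cases hxt : x = t
          · subst hxt
            have hbc : b c = false := h c hct
            rw [hbc] at hx
            simpa using hx
          · exact h x hxt
        · rintro rfl
          exact ⟨by simp, fun x _ => rfl⟩
      have e2 : (Function.update b t (xor (b t) (b c)) =
            fun i : Fin n => decide (i.val ≤ m)) ↔
          b = (fun i : Fin n => decide (i.val ≤ m + 1)) := by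
        rw [Function.update_eq_iff]
        constructor
        · rintro ⟨hx, h⟩
          have hbc : b c = true := by simpa [hc] using h c hct
          rw [hbc] at hx
          have hxx : (decide (t.val ≤ m)) = false := by simp [ht]
          rw [hxx] at hx
          have hbt : b t = true := by
            revert hx; cases b t <;> simp
          funext x
          by_cases hxt : x = t
          · subst hxt
            rw [hbt]; simp [ht]
          · rw [h x hxt]
            have hxv : x.val ≠ m + 1 := fun hcon => hxt (Fin.ext (by simp [ht, hcon]))
            exact decide_eq_decide.mpr (by omega)
        · rintro rfl
          refine ⟨by simp [ht, hc], fun x hxt => ?_⟩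
          have hxv : x.val ≠ m + 1 := fun hcon => hxt (Fin.ext (by simp [ht, hcon]))
          exact decide_eq_decide.mpr (by omega)
      simp only [e1, e2]
  have h1 := key (n - 1) le_rfl
  rw [List.take_of_length_le (by simp)] at h1
  rw [h1]
  funext b
  have : (fun i : Fin n => decide (i.val ≤ n - 1)) = (fun _ => true) := by
    funext i; simp; omega
  rw [this]
end

section
/- Let M ≥ 1 and U : Matrix (Fin M) (Fin M) ℂ. Define recursively the matrices G n U, where G n U is indexed by ((Fin n → Bool) × Fin M): G 0 U = U (identifying (Fin 0 → Bool) × Fin M with Fin M), and G (n+1) U is, under the identification (Fin (n+1) → Bool) ≃ Bool × (Fin n → Bool) splitting off the first qubit, the block matrix |false⟩⟨false| ⊗ I + |true⟩⟨true| ⊗ (G n U) (identity on the control-qubit-0 block, G n U on the control-qubit-1 block, zero off-diagonal blocks). Then for all n, b, c : Fin n → Bool and i, j : Fin M, (G n U) ((b,i),(c,j)) = 0 if b ≠ c, (G n U) ((b,i),(b,j)) = U i j if b k = true for all k, and (G n U) ((b,i),(b,j)) = (if i = j then 1 else 0) otherwise. That is, the recursive quantum program with nested qif statements implements the multi-controlled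 gate C^(*)(U) with n control qubits, which applies U to the data register exactly when all n control qubits are in state |1⟩. -/
/-- The matrix described by the recursive quantum program with nested qif statements:
`G 0 U = U` (on the data register alone), and `G (n+1) U`, splitting off the first
control qubit, is the block matrix `|false⟩⟨false| ⊗ I + |true⟩⟨true| ⊗ (G n U)`. -/
def multiCtrl (M : ℕ) (U : Matrix (Fin M) (Fin M) ℂ) :
    (n : ℕ) → Matrix ((Fin n → Bool) × Fin M) ((Fin n → Bool) × Fin M) ℂ
  | 0 => Matrix.of fun p q => U p.2 q.2
  | n + 1 => Matrix.of fun p q =>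
      if p.1 0 = q.1 0 then
        (if p.1 0 = true then
          multiCtrl M U n ((fun k => p.1 k.succ), p.2) ((fun k => q.1 k.succ), q.2)
        else
          (1 : Matrix ((Fin n → Bool) × Fin M) ((Fin n → Bool) × Fin M) ℂ)
            ((fun k => p.1 k.succ), p.2) ((fun k => q.1 k.succ), q.2))
      else 0

/-- The recursive program implements the multi-controlled gate `C^(*)(U)` with `n`
control qubits: off-diagonal (in the control bits) blocks vanish, the diagonal block
where all control bits are `true` is `U`, and every other diagonal block is the
identity. -/
theorem multiCtrl_correct (M : ℕ) (hM : 1 ≤ M) (U : Matrix (Fin M) (Fin M) ℂ)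
    (n : ℕ) (b c : Fin n → Bool) (i j : Fin M) :
    (b ≠ c → multiCtrl M U n (b, i) (c, j) = 0) ∧
      ((∀ k, b k = true) → multiCtrl M U n (b, i) (b, j) = U i j) ∧
      (¬ (∀ k, b k = true) →
        multiCtrl M U n (b, i) (b, j) = if i = j then 1 else 0) := by
  induction n with
  | zero =>
    exact ⟨fun h => absurd (funext fun k => k.elim0) h, fun _ => rfl,
      fun h => absurd (fun k => k.elim0) h⟩
  | succ n ih =>
    refine ⟨?_, ?_, ?_⟩
    · intro hbc
      show (if b 0 = c 0 then _ else 0) = 0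
      by_cases h0 : b 0 = c 0
      · rw [if_pos h0]
        have htail : (fun k : Fin n => b k.succ) ≠ (fun k => c k.succ) := by
          intro h
          apply hbc
          funext k
          refine Fin.cases h0 (fun k => congrFun h k) k
        by_cases hb : b 0 = true
        · rw [if_pos hb]
          exact (ih (fun k => b k.succ) (fun k => c k.succ)).1 htail
        · rw [if_neg hb]
          exact Matrix.one_apply_ne (fun h => htail (congrArg Prod.fst h))
      · rw [if_neg h0]
    · intro hall
      show (if b 0 = b 0 then _ else 0) = U i j
      rw [if_pos rfl, if_pos (hall 0)]
      exact (ih (fun k => b k.succ) (fun k => b k.succ)).2.1 (fun k => hall k.succ)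
    · intro hna
      show (if b 0 = b 0 then _ else 0) = _
      rw [if_pos rfl]
      by_cases hb : b 0 = true
      · rw [if_pos hb]
        have : ¬ ∀ k : Fin n, b k.succ = true := by
          intro h; exact hna (fun k => Fin.cases hb (fun k => h k) k)
        exact (ih (fun k => b k.succ) (fun k => b k.succ)).2.2 this
      · rw [if_neg hb]
        simp [Matrix.one_apply, Prod.ext_iff]
end

section
/- Let M ≥ 1 and let U : ℕ → Matrix (Fin M) (Fin M) ℂ be a family of matrices. Define recursively F : ℕ → ℕ → Matrix, where F k x is indexed by Fin (2^k) × Fin M: F 0 x = U x (identifying Fin 1 × Fin M with Fin M), and F (k+1) x is, under the identification Fin (2^{k+1}) ≃ Fin 2 × Fin (2^k) sending j to (⌊j / 2^k⌋, j mod 2^k) (most significant bit first), the block-diagonal matrix |0⟩⟨0| ⊗ F k (2x) + |1⟩⟨1| ⊗ F k (2x+1). Then for every n, j, j' ∈ Fin (2^n) and r, s ∈ Fin M, (F n 0) ((j,r),(j',s)) = U j r s if j = j' and 0 otherwise. That is, the recursive quantum multiplexor program — where each qif statement on control qubit q[k] branches to P(k−1, 2x) and P(k−1, 2x+1) and the base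 case calls the program for U_x — implements the quantum multiplexor ∑_{x ∈ [2^n]} |x⟩⟨x| ⊗ U_x. -/
/-!
Generalizing the offset `x`, `muxRec M U k x` is the multiplexor of the block `U (2 ^ k * x + j)`
at control value `j`. The inductive step works because `j ↦ (j / 2 ^ k, j % 2 ^ k)` is injective
and the branch `2 * x + j / 2 ^ k` chosen by the leading bit puts the block of `j` at
`2 ^ k * (2 * x + j / 2 ^ k) + j % 2 ^ k = 2 ^ (k + 1) * x + j`.
-/

/-- The matrix described by the recursive quantum multiplexor program:
`F 0 x = U x`, and `F (k+1) x`, under the identification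
`Fin (2^(k+1)) ≃ Fin 2 × Fin (2^k)` sending `j` to `(j / 2^k, j % 2^k)` (most
significant bit first), is the block-diagonal matrix
`|0⟩⟨0| ⊗ F k (2x) + |1⟩⟨1| ⊗ F k (2x+1)`. -/
def muxRec (M : ℕ) (U : ℕ → Matrix (Fin M) (Fin M) ℂ) :
    (k : ℕ) → ℕ → Matrix (Fin (2 ^ k) × Fin M) (Fin (2 ^ k) × Fin M) ℂ
  | 0, x => Matrix.of fun p q => U x p.2 q.2
  | k + 1, x => Matrix.of fun p q =>
      if (p.1 : ℕ) / 2 ^ k = (q.1 : ℕ) / 2 ^ k then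
        muxRec M U k (if (p.1 : ℕ) / 2 ^ k = 0 then 2 * x else 2 * x + 1)
          (⟨(p.1 : ℕ) % 2 ^ k, Nat.mod_lt _ (Nat.pow_pos (by norm_num))⟩, p.2)
          (⟨(q.1 : ℕ) % 2 ^ k, Nat.mod_lt _ (Nat.pow_pos (by norm_num))⟩, q.2)
      else 0

lemma Nat.ite_div_eq_zero_eq_add_div {n j : ℕ} (hj : j < n * 2) (y : ℕ) :
    (if j / n = 0 then y else y + 1) = y + j / n := by
  have : j / n < 2 := Nat.div_lt_of_lt_mul hj
  generalize j / n = d at *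
  split_ifs <;> omega

lemma Nat.two_pow_mul_add_mod (k x j : ℕ) :
    2 ^ k * (2 * x + j / 2 ^ k) + j % 2 ^ k = 2 ^ (k + 1) * x + j := by
  conv_rhs => rw [← Nat.div_add_mod j (2 ^ k)]
  ring

theorem muxRec_apply (M : ℕ) (U : ℕ → Matrix (Fin M) (Fin M) ℂ) (k x : ℕ)
    (j j' : Fin (2 ^ k)) (r s : Fin M) :
    muxRec M U k x (j, r) (j', s) = if j = j' then U (2 ^ k * x + j) r s else 0 := by
  induction k generalizing x with
  | zero =>
    obtain rfl : j = j' := Subsingleton.elim (α := Fin 1) _ _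
    simp [muxRec]
  | succ k ih =>
    simp only [muxRec, Matrix.of_apply, ih, Fin.mk.injEq,
      Nat.ite_div_eq_zero_eq_add_div (n := 2 ^ k) j.2, Nat.two_pow_mul_add_mod,
      Fin.ext_iff (a := j), Nat.ext_div_mod_iff (2 ^ k) j, ite_and]

theorem muxRec_correct_general (M : ℕ) (U : ℕ → Matrix (Fin M) (Fin M) ℂ)
    (n : ℕ) (j j' : Fin (2 ^ n)) (r s : Fin M) :
    muxRec M U n 0 (j, r) (j', s) = if j = j' then U j r s else 0 := by
  simp [muxRec_apply]

/-- The recursive quantum multiplexor program — where each qif statement on control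
qubit `q[k]` branches to `P(k−1, 2x)` and `P(k−1, 2x+1)` and the base case calls the
program for `U_x` — implements the quantum multiplexor `∑_{x ∈ [2^n]} |x⟩⟨x| ⊗ U_x`. -/
theorem muxRec_correct (M : ℕ) (hM : 1 ≤ M) (U : ℕ → Matrix (Fin M) (Fin M) ℂ)
    (n : ℕ) (j j' : Fin (2 ^ n)) (r s : Fin M) :
    muxRec M U n 0 (j, r) (j', s) = if j = j' then U j r s else 0 :=
  muxRec_correct_general M U n j j' r s
end

section
/- Let n ≥ 1, N = 2^n, and let α : Fin N → ℂ satisfy ∑_{j} |α j|² = 1 and α j ≠ 0 for all j. Let θ_j = Complex.arg (α j), so that α j = |α j| · exp(i θ_j). For 0 ≤ l ≤ r < N set S(l,r) = ∑_{j=l}^{r} |α j|². For 0 ≤ k < n and 0 ≤ x < 2^k set u = 2^{n−k} x, v = 2^{n−k} (x+1), w = (u+v)/2, γ(k,x) = S(u, w−1) / S(u, v−1), β(k,x) = θ_w − θ_u, and define the branch amplitudes a(k, x, 0) = √(γ(k,x)) and a(k, x, 1) = exp(i β(k,x)) · √(1 − γ(k,x)). For j ∈ [N] and 0 ≤ k <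 n, let bit(k,j) = ⌊j / 2^{n−1−k}⌋ mod 2 (the k-th most significant bit of j) and pre(k,j) = ⌊j / 2^{n−k}⌋ (the length-k binary prefix of j). Then for every j ∈ [N]: ∏_{k=0}^{n−1} a(k, pre(k,j), bit(k,j)) = exp(−i θ_0) · α j. Consequently, the recursive quantum state preparation program, whose single-qubit rotations U_{k,x} create the branch amplitudes a(k,x,0) and a(k,x,1) along the binary tree of quantum branches, prepares the state ∑_{j∈[N]} α_j |j⟩ up to the global phase exp(−i θ_0). -/
/-- `S(l,r) = ∑_{j=l}^{r} |α j|²`, the squared mass of the amplitudes with indices in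
the interval `[l, r]`. -/
noncomputable def qspS (N : ℕ) (α : Fin N → ℂ) (l r : ℕ) : ℝ :=
  ∑ j : Fin N, if l ≤ (j : ℕ) ∧ (j : ℕ) ≤ r then ‖α j‖ ^ 2 else 0

/-- `θ_j = arg (α j)` (and `0` for out-of-range indices). -/
noncomputable def qspTheta (N : ℕ) (α : Fin N → ℂ) (j : ℕ) : ℝ :=
  if h : j < N then Complex.arg (α ⟨j, h⟩) else 0

/-- `γ(k,x) = S(u, w−1) / S(u, v−1)` with `u = 2^{n−k} x`, `v = 2^{n−k} (x+1)` and
`w = (u+v)/2`. -/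
noncomputable def qspGamma (n N : ℕ) (α : Fin N → ℂ) (k x : ℕ) : ℝ :=
  qspS N α (2 ^ (n - k) * x) ((2 ^ (n - k) * x + 2 ^ (n - k) * (x + 1)) / 2 - 1) /
    qspS N α (2 ^ (n - k) * x) (2 ^ (n - k) * (x + 1) - 1)

/-- `β(k,x) = θ_w − θ_u` with `u = 2^{n−k} x`, `v = 2^{n−k} (x+1)` and `w = (u+v)/2`. -/
noncomputable def qspBeta (n N : ℕ) (α : Fin N → ℂ) (k x : ℕ) : ℝ :=
  qspTheta N α ((2 ^ (n - k) * x + 2 ^ (n - k) * (x + 1)) / 2) -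
    qspTheta N α (2 ^ (n - k) * x)

/-- The branch amplitudes produced by the single-qubit rotation `U_{k,x}`:
`a(k, x, 0) = √(γ(k,x))` and `a(k, x, 1) = exp(i β(k,x)) · √(1 − γ(k,x))`. -/
noncomputable def qspAmp (n N : ℕ) (α : Fin N → ℂ) (k x b : ℕ) : ℂ :=
  if b = 0 then ((Real.sqrt (qspGamma n N α k x) : ℝ) : ℂ)
  else Complex.exp (Complex.I * ((qspBeta n N α k x : ℝ) : ℂ)) *
    ((Real.sqrt (1 - qspGamma n N α k x) : ℝ) : ℂ)

/-!
Write `B(u, m) = √S(u, u+m−1) · exp(i θ_u)` for the amplitude carried by the block of indices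
`[u, u+m)`. Splitting a block of length `2p` into its two halves, the rotation amplitudes satisfy
`a(k,x,0) · B(u, 2p) = B(u, p)` and `a(k,x,1) · B(u, 2p) = B(u+p, p)`, because
`γ = S(left)/S(block)`, `1 − γ = S(right)/S(block)` and the phase `e^{iβ}` shifts `θ_u` to `θ_{u+p}`.
Following the bits of `j`, the product of amplitudes therefore telescopes from the whole register
`B(0, 2^n) = e^{iθ_0}` down to the single index `B(j, 1) = |α_j| e^{iθ_j} = α_j`.
-/

noncomputable def qspBlock (N : ℕ) (α : Fin N → ℂ) (u m : ℕ) : ℂ :=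
  ((Real.sqrt (qspS N α u (u + m - 1)) : ℝ) : ℂ) *
    Complex.exp (Complex.I * ((qspTheta N α u : ℝ) : ℂ))

section Blocks

variable {N : ℕ} {α : Fin N → ℂ}

lemma qspS_pos (hne : ∀ j, α j ≠ 0) {l r : ℕ} (hlr : l ≤ r) (hlN : l < N) :
    0 < qspS N α l r := by
  refine Finset.sum_pos' (fun i _ => by split_ifs <;> positivity) ⟨⟨l, hlN⟩, Finset.mem_univ _, ?_⟩
  rw [if_pos ⟨le_rfl, hlr⟩]
  exact pow_pos (norm_pos_iff.mpr (hne _)) 2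

lemma qspS_add_qspS {l m r : ℕ} (hlm : l < m) (hmr : m ≤ r) :
    qspS N α l (m - 1) + qspS N α m r = qspS N α l r := by
  unfold qspS
  rw [← Finset.sum_add_distrib]
  refine Finset.sum_congr rfl fun i _ => ?_
  split_ifs <;> first | ring1 | (exfalso; omega)

lemma qspS_eq_one (hnorm : ∑ j : Fin N, ‖α j‖ ^ 2 = 1) : qspS N α 0 (N - 1) = 1 := by
  rw [← hnorm]
  refine Finset.sum_congr rfl fun i _ => if_pos ⟨Nat.zero_le _, ?_⟩
  have := i.isLt
  omega

lemma qspS_singleton (j : Fin N) : qspS N α j j = ‖α j‖ ^ 2 := by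
  rw [qspS, Finset.sum_eq_single j (fun i _ hij => if_neg fun h => hij (Fin.ext (by omega)))
    (fun h => absurd (Finset.mem_univ j) h), if_pos ⟨le_rfl, le_rfl⟩]

lemma qspBlock_zero (hnorm : ∑ j : Fin N, ‖α j‖ ^ 2 = 1) :
    qspBlock N α 0 N = Complex.exp (Complex.I * ((qspTheta N α 0 : ℝ) : ℂ)) := by
  rw [qspBlock, zero_add, qspS_eq_one hnorm, Real.sqrt_one, Complex.ofReal_one, one_mul]

lemma qspBlock_one (j : Fin N) : qspBlock N α j 1 = α j := by
  rw [qspBlock, add_tsub_cancel_right, qspS_singleton, Real.sqrt_sq (norm_nonneg _), qspTheta,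
    dif_pos j.isLt, mul_comm Complex.I]
  exact Complex.norm_mul_exp_arg_mul_I (α j)

variable {u p : ℕ}

lemma qspBlock_left_half (hne : ∀ j, α j ≠ 0) (hp : 0 < p) (hN : u + 2 * p ≤ N) :
    ((Real.sqrt (qspS N α u (u + p - 1) / qspS N α u (u + 2 * p - 1)) : ℝ) : ℂ) *
      qspBlock N α u (2 * p) = qspBlock N α u p := by
  have hblock : 0 < qspS N α u (u + 2 * p - 1) := qspS_pos hne (by omega) (by omega)
  have hsqrt : (Real.sqrt (qspS N α u (u + 2 * p - 1)) : ℂ) ≠ 0 :=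
    Complex.ofReal_ne_zero.2 (Real.sqrt_pos.2 hblock).ne'
  rw [qspBlock, qspBlock, Real.sqrt_div' _ hblock.le, Complex.ofReal_div, ← mul_assoc,
    div_mul_cancel₀ _ hsqrt]

lemma qspBlock_right_half (hne : ∀ j, α j ≠ 0) (hp : 0 < p) (hN : u + 2 * p ≤ N) :
    Complex.exp (Complex.I * ((qspTheta N α (u + p) - qspTheta N α u : ℝ) : ℂ)) *
      ((Real.sqrt (1 - qspS N α u (u + p - 1) / qspS N α u (u + 2 * p - 1)) : ℝ) : ℂ) *
      qspBlock N α u (2 * p) = qspBlock N α (u + p) p := by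
  have hblock : 0 < qspS N α u (u + 2 * p - 1) := qspS_pos hne (by omega) (by omega)
  have hsqrt : (Real.sqrt (qspS N α u (u + 2 * p - 1)) : ℂ) ≠ 0 :=
    Complex.ofReal_ne_zero.2 (Real.sqrt_pos.2 hblock).ne'
  have hsplit := qspS_add_qspS (N := N) (α := α) (l := u) (m := u + p) (r := u + 2 * p - 1)
    (by omega) (by omega)
  have hcompl : 1 - qspS N α u (u + p - 1) / qspS N α u (u + 2 * p - 1)
      = qspS N α (u + p) (u + p + p - 1) / qspS N α u (u + 2 * p - 1) := by
    rw [show u + p + p - 1 = u + 2 * p - 1 by omega, eq_div_iff hblock.ne', sub_mul,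
      div_mul_cancel₀ _ hblock.ne', ← hsplit]
    ring
  rw [qspBlock, qspBlock, hcompl, Real.sqrt_div' _ hblock.le, Complex.ofReal_div]
  calc _ = (Real.sqrt (qspS N α (u + p) (u + p + p - 1)) : ℂ) *
        Complex.exp (Complex.I * ((qspTheta N α (u + p) - qspTheta N α u : ℝ) : ℂ) +
          Complex.I * (qspTheta N α u : ℂ)) := by
        rw [Complex.exp_add]
        field_simp
    _ = _ := by push_cast; ring_nf

end Blocks

section Levels

variable {n N : ℕ} {α : Fin N → ℂ} {k p : ℕ}

lemma qspGamma_eq (h : 2 ^ (n - k) = 2 * p) (x : ℕ) :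
    qspGamma n N α k x =
      qspS N α (2 * p * x) (2 * p * x + p - 1) / qspS N α (2 * p * x) (2 * p * x + 2 * p - 1) := by
  rw [qspGamma, h, show 2 * p * (x + 1) = 2 * p * x + 2 * p by ring]
  congr 2
  omega

lemma qspBeta_eq (h : 2 ^ (n - k) = 2 * p) (x : ℕ) :
    qspBeta n N α k x = qspTheta N α (2 * p * x + p) - qspTheta N α (2 * p * x) := by
  rw [qspBeta, h, show 2 * p * (x + 1) = 2 * p * x + 2 * p by ring]
  congr 2
  omega

end Levels

lemma Nat.mul_div_eq_two_mul_mul_div_add (j p : ℕ) :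
    p * (j / p) = 2 * p * (j / (2 * p)) + p * (j / p % 2) := by
  rw [mul_comm 2 p, ← Nat.div_div_eq_div_mul, mul_assoc, ← mul_add, Nat.div_add_mod]

lemma qspAmp_mul_qspBlock {n : ℕ} {α : Fin (2 ^ n) → ℂ} (hne : ∀ j, α j ≠ 0) {j k : ℕ}
    (hj : j < 2 ^ n) (hk : k < n) :
    qspAmp n (2 ^ n) α k (j / 2 ^ (n - k)) (j / 2 ^ (n - 1 - k) % 2) *
        qspBlock (2 ^ n) α (2 ^ (n - k) * (j / 2 ^ (n - k))) (2 ^ (n - k)) =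
      qspBlock (2 ^ n) α (2 ^ (n - (k + 1)) * (j / 2 ^ (n - (k + 1)))) (2 ^ (n - (k + 1))) := by
  rw [show n - 1 - k = n - (k + 1) by omega]
  set p := 2 ^ (n - (k + 1))
  have hp : 0 < p := Nat.two_pow_pos _
  have h2p : 2 ^ (n - k) = 2 * p := by rw [← pow_succ']; congr 1; omega
  have hfit : 2 * p * (j / (2 * p)) + 2 * p ≤ 2 ^ n := by
    have hn : 2 ^ n = 2 * p * 2 ^ k := by rw [← h2p, ← pow_add]; congr 1; omega
    have : j / (2 * p) < 2 ^ k := Nat.div_lt_of_lt_mul (hn ▸ hj)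
    rw [hn]
    nlinarith
  rw [h2p, Nat.mul_div_eq_two_mul_mul_div_add j p, qspAmp, qspGamma_eq h2p, qspBeta_eq h2p]
  rcases Nat.mod_two_eq_zero_or_one (j / p) with hb | hb <;> simp only [hb, ↓reduceIte,
    one_ne_zero, mul_zero, add_zero, mul_one]
  · exact qspBlock_left_half hne hp hfit
  · exact qspBlock_right_half hne hp hfit

theorem qsp_correct_general (n : ℕ) (N : ℕ) (hN : N = 2 ^ n) (α : Fin N → ℂ)
    (hnorm : ∑ j : Fin N, ‖α j‖ ^ 2 = 1) (hne : ∀ j, α j ≠ 0) :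
    ∀ j : Fin N,
      ∏ k ∈ Finset.range n,
          qspAmp n N α k ((j : ℕ) / 2 ^ (n - k)) ((j : ℕ) / 2 ^ (n - 1 - k) % 2)
        = Complex.exp (-Complex.I * ((qspTheta N α 0 : ℝ) : ℂ)) * α j := by
  subst hN
  intro j
  set phase := Complex.exp (-Complex.I * ((qspTheta (2 ^ n) α 0 : ℝ) : ℂ))
  have hphase : phase * Complex.exp (Complex.I * ((qspTheta (2 ^ n) α 0 : ℝ) : ℂ)) = 1 := by
    rw [← Complex.exp_add, neg_mul, neg_add_cancel, Complex.exp_zero]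
  refine Finset.prod_range_induction _
    (fun k => phase * qspBlock (2 ^ n) α (2 ^ (n - k) * (j / 2 ^ (n - k))) (2 ^ (n - k))) ?_ n
    (fun k hk => ?_) |>.trans ?_
  · rw [Nat.sub_zero, Nat.div_eq_of_lt j.isLt, mul_zero, qspBlock_zero hnorm, hphase]
  · rw [mul_assoc, ← qspAmp_mul_qspBlock hne j.isLt hk, mul_comm (qspAmp _ _ _ _ _ _)]
  · rw [Nat.sub_self, pow_zero, one_mul, Nat.div_one, qspBlock_one]

/-- Correctness of the recursive quantum state preparation program: for every basis
index `j`, the product over the levels `k = 0, …, n−1` of the branch amplitudes along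
the path of `j` in the binary tree of quantum branches — where at level `k` the node is
the length-`k` binary prefix `⌊j / 2^{n−k}⌋` of `j` and the chosen branch is the `k`-th
most significant bit `⌊j / 2^{n−1−k}⌋ mod 2` of `j` — equals `exp(−i θ_0) · α j`.
Hence the program prepares the state `∑_{j∈[N]} α_j |j⟩` up to the global phase
`exp(−i θ_0)`. -/
theorem qsp_correct (n : ℕ) (hn : 1 ≤ n) (N : ℕ) (hN : N = 2 ^ n) (α : Fin N → ℂ)
    (hnorm : ∑ j : Fin N, ‖α j‖ ^ 2 = 1) (hne : ∀ j, α j ≠ 0) :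
    ∀ j : Fin N,
      ∏ k ∈ Finset.range n,
          qspAmp n N α k ((j : ℕ) / 2 ^ (n - k)) ((j : ℕ) / 2 ^ (n - 1 - k) % 2)
        = Complex.exp (-Complex.I * ((qspTheta N α 0 : ℝ) : ℂ)) * α j :=
  qsp_correct_general n N hN α hnorm hne
end
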